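/- arXiv:1109.2864 — 3 statements merged into one kernel-verified Lean document; each statement's English description precedes it below -/
import Mathlib

section
/- Let n ≥ 1 and 1 ≤ q < 2. Let ρ be a nonnegative integrable function with mass M, center of mass at the origin (∫ y ρ(y) dy = 0), and support contained in the ball B(0,R). Then for any x with |x| = R, the attraction term satisfies −∫ x·(x−y) |x−y|^(q-2) ρ(y) dy ≤ −2^(q-2) M R^q. -/
open MeasureTheory Metric RealInnerProductSpace

/-!
On the support of `ρ` every `y` lies strictly inside the sphere through `x`, so `⟪x, x - y⟫ ≥ 0`
and `0 < ‖x - y‖ ≤ 2‖x‖`; since `q - 2 ≤ 0` this gives `‖x - y‖ ^ (q - 2) ≥ (2‖x‖) ^ (q - 2)`.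
The attraction integral therefore dominates `(2‖x‖) ^ (q - 2) ∫ ⟪x, x - y⟫ ρ y`, and by the vanishing
center of mass the last integral is `‖x‖² M`.
-/

section SeminormedAddCommGroup

variable {E : Type*} [SeminormedAddCommGroup E]

lemma norm_sub_le_two_mul_of_norm_le {x y : E} (h : ‖y‖ ≤ ‖x‖) : ‖x - y‖ ≤ 2 * ‖x‖ := by
  linarith [norm_sub_le x y]

lemma norm_sub_pos_of_norm_lt {x y : E} (h : ‖y‖ < ‖x‖) : 0 < ‖x - y‖ := by
  linarith [norm_sub_norm_le x y]

end SeminormedAddCommGroup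

section InnerProductSpace

variable {E : Type*} [NormedAddCommGroup E] [InnerProductSpace ℝ E]

lemma real_inner_sub_nonneg_of_norm_le {x y : E} (h : ‖y‖ ≤ ‖x‖) : 0 ≤ ⟪x, x - y⟫ := by
  rw [inner_sub_right, real_inner_self_eq_norm_sq]
  nlinarith [real_inner_le_norm x y, norm_nonneg y]

lemma rpow_mul_inner_sub_le {q : ℝ} (hq : q ≤ 2) {x y : E} (h : ‖y‖ < ‖x‖) :
    (2 * ‖x‖) ^ (q - 2) * ⟪x, x - y⟫ ≤ ⟪x, x - y⟫ * ‖x - y‖ ^ (q - 2) := by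
  rw [mul_comm]
  exact mul_le_mul_of_nonneg_left
    (Real.rpow_le_rpow_of_nonpos (norm_sub_pos_of_norm_lt h)
      (norm_sub_le_two_mul_of_norm_le h.le) (by linarith))
    (real_inner_sub_nonneg_of_norm_le h.le)

lemma norm_inner_sub_mul_rpow_le {q : ℝ} (hq : 1 ≤ q) {x y : E} (h : ‖y‖ < ‖x‖) :
    ‖⟪x, x - y⟫ * ‖x - y‖ ^ (q - 2)‖ ≤ ‖x‖ * (2 * ‖x‖) ^ (q - 1) := by
  have hpos := norm_sub_pos_of_norm_lt h
  have hrpow : ‖x - y‖ * ‖x - y‖ ^ (q - 2) = ‖x - y‖ ^ (q - 1) := by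
    rw [show q - 1 = 1 + (q - 2) by ring, Real.rpow_add hpos, Real.rpow_one]
  calc ‖⟪x, x - y⟫ * ‖x - y‖ ^ (q - 2)‖
      = |⟪x, x - y⟫| * ‖x - y‖ ^ (q - 2) := by
        rw [norm_mul, Real.norm_eq_abs, Real.norm_of_nonneg (by positivity)]
    _ ≤ ‖x‖ * ‖x - y‖ * ‖x - y‖ ^ (q - 2) := by
        gcongr; exact abs_real_inner_le_norm x (x - y)
    _ = ‖x‖ * ‖x - y‖ ^ (q - 1) := by rw [mul_assoc, hrpow]
    _ ≤ ‖x‖ * (2 * ‖x‖) ^ (q - 1) := by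
        gcongr
        exact norm_sub_le_two_mul_of_norm_le h.le

end InnerProductSpace

lemma MeasureTheory.Integrable.mul_of_norm_le_on_support {α : Type*} [MeasurableSpace α]
    {μ : Measure α} {k ρ : α → ℝ} {C : ℝ} (hρ : Integrable ρ μ) (hk : AEStronglyMeasurable k μ)
    (hbound : ∀ y ∈ Function.support ρ, ‖k y‖ ≤ C) : Integrable (fun y => k y * ρ y) μ := by
  refine (hρ.norm.const_mul C).mono (hk.mul hρ.aestronglyMeasurable) (.of_forall fun y => ?_)
  by_cases hy : ρ y = 0
  · simp [hy]
  · have hC : 0 ≤ C := (norm_nonneg _).trans (hbound y hy)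
    rw [norm_mul, Real.norm_of_nonneg (by positivity : 0 ≤ C * ‖ρ y‖)]
    exact mul_le_mul_of_nonneg_right (hbound y hy) (norm_nonneg _)

section Measure

variable {E : Type*} [NormedAddCommGroup E] [InnerProductSpace ℝ E] [MeasurableSpace E]
  {μ : Measure E} {ρ : E → ℝ}

lemma MeasureTheory.Integrable.smul_id_of_support_subset_ball [BorelSpace E]
    [SecondCountableTopology E] {r : ℝ} (hρ : Integrable ρ μ) (hsupp : Function.support ρ ⊆ ball 0 r) :
    Integrable (fun y => ρ y • y) μ := by
  refine (hρ.norm.const_mul r).mono (hρ.aestronglyMeasurable.smul aestronglyMeasurable_id)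
    (.of_forall fun y => ?_)
  by_cases hy : ρ y = 0
  · simp [hy]
  · have hyr : ‖y‖ < r := mem_ball_zero_iff.mp (hsupp hy)
    have hr : 0 ≤ r := (norm_nonneg y).trans hyr.le
    rw [norm_smul, Real.norm_of_nonneg (by positivity : 0 ≤ r * ‖ρ y‖), mul_comm r]
    exact mul_le_mul_of_nonneg_left hyr.le (norm_nonneg _)

lemma integral_inner_sub_mul_eq_of_integral_smul_eq_zero [CompleteSpace E] (x : E)
    (hρ : Integrable ρ μ) (hv : Integrable (fun y => ρ y • y) μ)
    (hcm : ∫ y, ρ y • y ∂μ = 0) :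
    ∫ y, ⟪x, x - y⟫ * ρ y ∂μ = ‖x‖ ^ 2 * ∫ y, ρ y ∂μ := by
  have hsplit : ∀ y, ⟪x, x - y⟫ * ρ y = ‖x‖ ^ 2 * ρ y - ⟪x, ρ y • y⟫ := fun y => by
    rw [inner_sub_right, real_inner_self_eq_norm_sq, real_inner_smul_right]
    ring
  simp_rw [hsplit]
  rw [integral_sub (hρ.const_mul _) (hv.const_inner x), integral_inner hv x, hcm,
    inner_zero_right, sub_zero, integral_const_mul]

lemma mul_rpow_le_integral_inner_sub_mul_rpow_mul [BorelSpace E] [CompleteSpace E]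
    [SecondCountableTopology E]
    {q : ℝ} (hq1 : 1 ≤ q) (hq2 : q ≤ 2) (x : E) (hρ0 : ∀ y, 0 ≤ ρ y) (hρ : Integrable ρ μ)
    (hsupp : Function.support ρ ⊆ ball 0 ‖x‖) (hcm : ∫ y, ρ y • y ∂μ = 0) :
    2 ^ (q - 2) * (∫ y, ρ y ∂μ) * ‖x‖ ^ q ≤
      ∫ y, ⟪x, x - y⟫ * ‖x - y‖ ^ (q - 2) * ρ y ∂μ := by
  have hinside : ∀ y ∈ Function.support ρ, ‖y‖ < ‖x‖ := fun y hy =>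
    mem_ball_zero_iff.mp (hsupp hy)
  have hkernel : Measurable fun y : E => ⟪x, x - y⟫ * ‖x - y‖ ^ (q - 2) := by
    fun_prop
  have hint : Integrable (fun y => ⟪x, x - y⟫ * ‖x - y‖ ^ (q - 2) * ρ y) μ :=
    hρ.mul_of_norm_le_on_support hkernel.aestronglyMeasurable
      fun y hy => norm_inner_sub_mul_rpow_le hq1 (hinside y hy)
  have hpointwise : ∀ y, (2 * ‖x‖) ^ (q - 2) * (⟪x, x - y⟫ * ρ y) ≤
      ⟪x, x - y⟫ * ‖x - y‖ ^ (q - 2) * ρ y := fun y => by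
    by_cases hy : ρ y = 0
    · simp [hy]
    · rw [← mul_assoc]
      exact mul_le_mul_of_nonneg_right (rpow_mul_inner_sub_le hq2 (hinside y hy)) (hρ0 y)
  have hnonneg : ∀ y, 0 ≤ (2 * ‖x‖) ^ (q - 2) * (⟪x, x - y⟫ * ρ y) := fun y => by
    by_cases hy : ρ y = 0
    · simp [hy]
    · have hinner := real_inner_sub_nonneg_of_norm_le (hinside y hy).le
      have hρy := hρ0 y
      positivity
  have hpow : ‖x‖ ^ q = ‖x‖ ^ (q - 2) * ‖x‖ ^ 2 := by
    rw [← Real.rpow_natCast, ← Real.rpow_add' (norm_nonneg x) (by norm_num; linarith)]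
    norm_num
  calc 2 ^ (q - 2) * (∫ y, ρ y ∂μ) * ‖x‖ ^ q
      = (2 * ‖x‖) ^ (q - 2) * ∫ y, ⟪x, x - y⟫ * ρ y ∂μ := by
        rw [integral_inner_sub_mul_eq_of_integral_smul_eq_zero x hρ
          (hρ.smul_id_of_support_subset_ball hsupp) hcm,
          Real.mul_rpow zero_le_two (norm_nonneg x), hpow]
        ring
    _ = ∫ y, (2 * ‖x‖) ^ (q - 2) * (⟪x, x - y⟫ * ρ y) ∂μ := (integral_const_mul _ _).symm
    _ ≤ ∫ y, ⟪x, x - y⟫ * ‖x - y‖ ^ (q - 2) * ρ y ∂μ :=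
        integral_mono_of_nonneg (.of_forall hnonneg) hint (.of_forall hpointwise)

end Measure

theorem stmt6_general (n : ℕ) (q : ℝ) (hq1 : 1 ≤ q) (hq2 : q < 2)
    (R M : ℝ)
    (ρ : EuclideanSpace ℝ (Fin n) → ℝ)
    (hρ0 : ∀ y, 0 ≤ ρ y) (hρint : Integrable ρ) (hM : ∫ y, ρ y = M)
    (hsupp : Function.support ρ ⊆ Metric.ball (0 : EuclideanSpace ℝ (Fin n)) R)
    (hcm : ∫ y, ρ y • y = (0 : EuclideanSpace ℝ (Fin n)))
    (x : EuclideanSpace ℝ (Fin n)) (hx : ‖x‖ = R) :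
    -(∫ y, ⟪x, x - y⟫ * ‖x - y‖ ^ (q - 2) * ρ y) ≤
      -(2 ^ (q - 2) * M * R ^ q) := by
  subst hx hM
  exact neg_le_neg (mul_rpow_le_integral_inner_sub_mul_rpow_mul hq1 hq2.le x hρ0 hρint hsupp hcm)

theorem stmt6 (n : ℕ) (hn : 1 ≤ n) (q : ℝ) (hq1 : 1 ≤ q) (hq2 : q < 2)
    (R M : ℝ) (hR : 0 < R)
    (ρ : EuclideanSpace ℝ (Fin n) → ℝ)
    (hρ0 : ∀ y, 0 ≤ ρ y) (hρint : Integrable ρ) (hM : ∫ y, ρ y = M)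
    (hsupp : Function.support ρ ⊆ Metric.ball (0 : EuclideanSpace ℝ (Fin n)) R)
    (hcm : ∫ y, ρ y • y = (0 : EuclideanSpace ℝ (Fin n)))
    (x : EuclideanSpace ℝ (Fin n)) (hx : ‖x‖ = R) :
    -(∫ y, ⟪x, x - y⟫ * ‖x - y‖ ^ (q - 2) * ρ y) ≤
      -(2 ^ (q - 2) * M * R ^ q) :=
  stmt6_general n q hq1 hq2 R M ρ hρ0 hρint hM hsupp hcm x hx
end

section
/- Let n ≥ 2, 0 < α < n, −R < μ < 0, and let ρ̄ : ℝⁿ → ℝ be bounded, vanishing outside B(0,R), and satisfying ρ̄(x) = α ∫_{B(0,R)} |x−y|^(α−n) ρ̄(y) dy for x ∈ B(0,R). Let x^μ denote reflection across {x₁ = μ}, ρ̄_μ(x) = ρ̄(x^μ), and Σ_μ = {x ∈ B(0,R) : x₁ ≥ μ}. Then for every x ∈ Σ_μ ∩ B(0^μ, R), ρ̄(x) − ρ̄_μ(x) = α ∫_{Σ_μ} (|x−y|^(α−n) − |x^μ−y|^(α−n)) (ρ̄(y) − ρ̄_μ(y)) dy. -/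
/-!
Cut `B(0,R)` along the hyperplane `{x₁ = μ}` and reflect the part with `x₁ < μ`; the reflection is
a measure-preserving isometry, so the integral equation at any point `a` becomes an integral over
`{x₁ ≥ μ}` of `|a - y|^(α-n) ρ̄(y) + |a^μ - y|^(α-n) ρ̄_μ(y)`. Since `μ ≤ 0`, reflecting a point of
`{x₁ ≥ μ}` does not bring it closer to the origin, so both terms vanish outside `Σ_μ`. Subtracting
the identities at `a = x` and `a = x^μ` leaves exactly the claimed formula; integrability of the
kernel comes from the local integrability of `|y|^(α-n)`, as `α - n > -n`.
-/

open MeasureTheory Metric Set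

noncomputable def reflect (n : ℕ) (μ : ℝ) (x : EuclideanSpace ℝ (Fin n)) :
    EuclideanSpace ℝ (Fin n) :=
  WithLp.toLp 2 (fun i : Fin n => if (i : ℕ) = 0 then 2 * μ - x i else x i)

section Kernel

variable {E : Type*} [NormedAddCommGroup E] [NormedSpace ℝ E] [FiniteDimensional ℝ E]
  [MeasurableSpace E] [BorelSpace E] {ν : Measure E} [ν.IsAddHaarMeasure]

lemma locallyIntegrable_norm_sub_rpow (hd : 1 ≤ Module.finrank ℝ E) {s : ℝ}
    (hs : -(Module.finrank ℝ E : ℝ) < s) (a : E) :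
    LocallyIntegrable (fun y => ‖a - y‖ ^ s) ν := by
  have h0 : LocallyIntegrable (fun y : E => ‖y‖ ^ s) ν :=
    locallyIntegrable_of_norm_le_rpow hd (C := 1) (α := -s) (by linarith)
      (ae_of_all _ fun y => by simp [abs_of_nonneg (Real.rpow_nonneg (norm_nonneg y) s)])
      (by fun_prop : Measurable fun y : E => ‖y‖ ^ s).aestronglyMeasurable
  rw [← map_sub_right_eq_self ν a] at h0
  simp_rw [norm_sub_rev a]
  exact (locallyIntegrable_map_homeomorph (Homeomorph.subRight a)).1 h0

lemma integrable_norm_sub_rpow_mul (hd : 1 ≤ Module.finrank ℝ E) {s : ℝ}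
    (hs : -(Module.finrank ℝ E : ℝ) < s) (a : E) {g : E → ℝ} {C r : ℝ}
    (hg : AEStronglyMeasurable g ν) (hgC : ∀ z, |g z| ≤ C) (hgr : ∀ z ∉ ball (0 : E) r, g z = 0) :
    Integrable (fun y => ‖a - y‖ ^ s * g y) ν := by
  have hsupp : Function.support (fun y => ‖a - y‖ ^ s * g y) ⊆ closedBall 0 r := fun y hy =>
    ball_subset_closedBall (by_contra fun h => hy (by simp [hgr y h]))
  rw [← integrableOn_iff_integrable_of_support_subset hsupp]
  exact ((locallyIntegrable_norm_sub_rpow hd hs a).integrableOn_isCompact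
    (isCompact_closedBall 0 r)).mul_bdd hg.restrict (ae_of_all _ hgC)

end Kernel

lemma EuclideanSpace.volume_setOf_apply_eq {ι : Type*} [Fintype ι] (i : ι) (c : ℝ) :
    volume {z : EuclideanSpace ℝ ι | z i = c} = 0 := by
  have h := (PiLp.volume_preserving_ofLp ι).measure_preimage
    (measurableSet_eq_fun (measurable_pi_apply i) (measurable_const (a := c))).nullMeasurableSet
  rw [volume_pi, Measure.pi_hyperplane] at h
  exact h

section Reflection

variable (n : ℕ) (μ : ℝ)

lemma reflect_involutive : Function.Involutive (reflect n μ) := by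
  intro x; ext i; simp only [reflect, PiLp.toLp_apply]; split_ifs <;> ring

lemma measurePreserving_reflect : MeasurePreserving (reflect n μ) := by
  have hcoord (i : Fin n) :
      MeasurePreserving fun t : ℝ => if (i : ℕ) = 0 then 2 * μ - t else t := by
    by_cases h : (i : ℕ) = 0
    · simpa only [h, if_true] using Measure.measurePreserving_sub_left volume (2 * μ)
    · simp only [h, if_false]
      exact MeasurePreserving.id volume
  exact (PiLp.volume_preserving_toLp (Fin n)).comp
    ((volume_preserving_pi hcoord).comp (PiLp.volume_preserving_ofLp (Fin n)))

lemma measurableEmbedding_reflect : MeasurableEmbedding (reflect n μ) :=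
  (MeasurableEquiv.ofInvolutive _ (reflect_involutive n μ)
    (measurePreserving_reflect n μ).measurable).measurableEmbedding

variable {n μ}

lemma reflect_apply_zero (hn : 0 < n) (x : EuclideanSpace ℝ (Fin n)) :
    reflect n μ x ⟨0, hn⟩ = 2 * μ - x ⟨0, hn⟩ := by
  simp [reflect]

lemma integrable_comp_reflect {F : EuclideanSpace ℝ (Fin n) → ℝ} (hF : Integrable F) :
    Integrable (fun y => F (reflect n μ y)) :=
  ((measurePreserving_reflect n μ).integrable_comp_emb (measurableEmbedding_reflect n μ)).2 hF

lemma norm_reflect_sub_reflect (x y : EuclideanSpace ℝ (Fin n)) :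
    ‖reflect n μ x - reflect n μ y‖ = ‖x - y‖ := by
  simp only [EuclideanSpace.norm_eq, PiLp.sub_apply, reflect]
  congr 1
  refine Finset.sum_congr rfl fun i _ => ?_
  split_ifs
  · rw [show 2 * μ - x i - (2 * μ - y i) = -(x i - y i) by ring, norm_neg]
  · rfl

lemma norm_reflect_sub (x y : EuclideanSpace ℝ (Fin n)) :
    ‖reflect n μ x - y‖ = ‖x - reflect n μ y‖ := by
  rw [← norm_reflect_sub_reflect, reflect_involutive]

lemma reflect_mem_ball_zero_iff {R : ℝ} {x : EuclideanSpace ℝ (Fin n)} :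
    reflect n μ x ∈ ball 0 R ↔ x ∈ ball (reflect n μ 0) R := by
  rw [mem_ball_iff_norm, mem_ball_iff_norm, norm_reflect_sub]

lemma norm_le_norm_reflect (hn : 0 < n) (hμ : μ ≤ 0) {x : EuclideanSpace ℝ (Fin n)}
    (hx : μ ≤ x ⟨0, hn⟩) : ‖x‖ ≤ ‖reflect n μ x‖ := by
  simp only [EuclideanSpace.norm_eq, reflect, Real.norm_eq_abs, sq_abs]
  refine Real.sqrt_le_sqrt (Finset.sum_le_sum fun i _ => ?_)
  split_ifs with h
  · obtain rfl : i = ⟨0, hn⟩ := Fin.ext h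
    nlinarith
  · rfl

lemma setIntegral_ball_eq_setIntegral_cap_add_reflect (hn : 0 < n) (hμ : μ ≤ 0) {R : ℝ}
    {F : EuclideanSpace ℝ (Fin n) → ℝ} (hF : Integrable F) (hFR : ∀ z ∉ ball 0 R, F z = 0) :
    ∫ y in ball 0 R, F y =
      ∫ y in {z ∈ ball (0 : EuclideanSpace ℝ (Fin n)) R | μ ≤ z ⟨0, hn⟩},
        (F y + F (reflect n μ y)) := by
  set H := {z : EuclideanSpace ℝ (Fin n) | μ ≤ z ⟨0, hn⟩}
  have hH : MeasurableSet H := measurableSet_le measurable_const (by fun_prop)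
  have hpre : reflect n μ ⁻¹' Hᶜ =ᵐ[volume] H := by
    refine Filter.eventuallyEq_set.2 ?_
    filter_upwards [compl_mem_ae_iff.2 (EuclideanSpace.volume_setOf_apply_eq ⟨0, hn⟩ μ)]
      with z (hz : z ⟨0, hn⟩ ≠ μ)
    change ¬μ ≤ reflect n μ z ⟨0, hn⟩ ↔ μ ≤ z ⟨0, hn⟩
    rw [reflect_apply_zero, not_le]
    exact ⟨fun h => by linarith, fun h => by linarith [lt_of_le_of_ne h hz.symm]⟩
  have hcomp : ∫ y in Hᶜ, F y = ∫ y in H, F (reflect n μ y) := by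
    rw [← (measurePreserving_reflect n μ).setIntegral_preimage_emb
      (measurableEmbedding_reflect n μ), setIntegral_congr_set hpre]
  have hcapF : ∫ y in H, F y = ∫ y in ball 0 R ∩ H, F y :=
    setIntegral_eq_of_subset_of_forall_sdiff_eq_zero hH inter_subset_right
      fun z hz => hFR z fun hzR => hz.2 ⟨hzR, hz.1⟩
  have hcapFr : ∫ y in H, F (reflect n μ y) = ∫ y in ball 0 R ∩ H, F (reflect n μ y) :=
    setIntegral_eq_of_subset_of_forall_sdiff_eq_zero hH inter_subset_right fun z hz =>
      hFR _ fun hzR => hz.2 ⟨mem_ball_zero_iff.2 <|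
        (norm_le_norm_reflect hn hμ hz.1).trans_lt (mem_ball_zero_iff.1 hzR), hz.1⟩
  rw [setIntegral_eq_integral_of_forall_compl_eq_zero hFR, ← integral_add_compl hH hF, hcomp,
    hcapF, hcapFr, integral_add hF.integrableOn (integrable_comp_reflect hF).integrableOn]
  rfl

end Reflection

theorem stmt12 (n : ℕ) (hn : 2 ≤ n) (α : ℝ) (hα1 : 0 < α)
    (R μ : ℝ) (hμ2 : μ < 0)
    (ρ : EuclideanSpace ℝ (Fin n) → ℝ) (hmeas : Measurable ρ)
    (C : ℝ) (hbdd : ∀ z, |ρ z| ≤ C)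
    (hvanish : ∀ z ∉ Metric.ball (0 : EuclideanSpace ℝ (Fin n)) R, ρ z = 0)
    (heq : ∀ x ∈ Metric.ball (0 : EuclideanSpace ℝ (Fin n)) R,
      ρ x = α * ∫ y in Metric.ball (0 : EuclideanSpace ℝ (Fin n)) R,
        ‖x - y‖ ^ (α - n) * ρ y) :
    ∀ x, x ∈ Metric.ball (0 : EuclideanSpace ℝ (Fin n)) R → μ ≤ x ⟨0, by omega⟩ →
      x ∈ Metric.ball (reflect n μ 0) R →
      ρ x - ρ (reflect n μ x) =
        α * ∫ y in {z ∈ Metric.ball (0 : EuclideanSpace ℝ (Fin n)) R |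
              μ ≤ z ⟨0, by omega⟩},
          (‖x - y‖ ^ (α - n) - ‖reflect n μ x - y‖ ^ (α - n)) *
            (ρ y - ρ (reflect n μ y)) := by
  intro x hx _ hx'
  set S := {z ∈ ball (0 : EuclideanSpace ℝ (Fin n)) R | μ ≤ z ⟨0, by omega⟩}
  have hint (a : EuclideanSpace ℝ (Fin n)) : Integrable fun y => ‖a - y‖ ^ (α - n) * ρ y :=
    integrable_norm_sub_rpow_mul (by rw [finrank_euclideanSpace_fin]; omega)
      (by rw [finrank_euclideanSpace_fin]; linarith) a hmeas.aestronglyMeasurable hbdd hvanish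
  have hsplit (a : EuclideanSpace ℝ (Fin n)) :
      ∫ y in ball 0 R, ‖a - y‖ ^ (α - n) * ρ y =
        ∫ y in S, (‖a - y‖ ^ (α - n) * ρ y + ‖a - reflect n μ y‖ ^ (α - n) * ρ (reflect n μ y)) :=
    setIntegral_ball_eq_setIntegral_cap_add_reflect (by omega) hμ2.le (hint a)
      fun z hz => by rw [hvanish z hz, mul_zero]
  have hsum (a : EuclideanSpace ℝ (Fin n)) : IntegrableOn
      (fun y => ‖a - y‖ ^ (α - n) * ρ y + ‖a - reflect n μ y‖ ^ (α - n) * ρ (reflect n μ y)) S :=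
    ((hint a).fun_add (integrable_comp_reflect (hint a))).integrableOn
  rw [heq x hx, heq _ (reflect_mem_ball_zero_iff.2 hx'), hsplit, hsplit, ← mul_sub,
    ← integral_sub (hsum x) (hsum _)]
  congr 1
  refine integral_congr_ae (ae_of_all _ fun y => ?_)
  simp only [← norm_reflect_sub, reflect_involutive n μ x]
  ring
end

section
/- Let n ≥ 2 and 0 ≤ r < 1. Then ∫₀^π sin^(n−2)θ · ln(√(1 − r² sin²θ) − r cos θ) dθ = ln(1 − r²) · ∫₀^{π/2} sin^(n−2)θ dθ. -/
open Real

theorem stmt17 (n : ℕ) (hn : 2 ≤ n) (r : ℝ) (hr0 : 0 ≤ r) (hr1 : r < 1) :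
    ∫ θ in (0 : ℝ)..Real.pi,
        Real.sin θ ^ (n - 2) *
          Real.log (Real.sqrt (1 - r ^ 2 * Real.sin θ ^ 2) - r * Real.cos θ) =
      Real.log (1 - r ^ 2) * ∫ θ in (0 : ℝ)..(Real.pi / 2), Real.sin θ ^ (n - 2) := by
  set f : ℝ → ℝ := fun θ =>
    Real.sin θ ^ (n - 2) *
      Real.log (Real.sqrt (1 - r ^ 2 * Real.sin θ ^ 2) - r * Real.cos θ) with hf
  have hX : ∀ θ : ℝ, (r * Real.cos θ) ^ 2 < 1 - r ^ 2 * Real.sin θ ^ 2 := by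
    intro θ
    have h1 : Real.sin θ ^ 2 + Real.cos θ ^ 2 = 1 := Real.sin_sq_add_cos_sq θ
    nlinarith [sq_nonneg (Real.cos θ), sq_nonneg r]
  have hpos : ∀ θ : ℝ, 0 < Real.sqrt (1 - r ^ 2 * Real.sin θ ^ 2) - r * Real.cos θ := by
    intro θ
    have h2 : |r * Real.cos θ| < Real.sqrt (1 - r ^ 2 * Real.sin θ ^ 2) := by
      rw [← Real.sqrt_sq_eq_abs]
      exact Real.sqrt_lt_sqrt (sq_nonneg _) (hX θ)
    have h3 := (abs_lt.mp h2).2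
    linarith
  have hcont : Continuous f := by
    apply Continuous.mul (by fun_prop)
    apply Continuous.log (by fun_prop)
    intro x
    exact (hpos x).ne'
  have hint : ∀ a b : ℝ, IntervalIntegrable f MeasureTheory.volume a b :=
    fun a b => hcont.intervalIntegrable a b
  have hsplit : (∫ θ in (0:ℝ)..Real.pi, f θ) =
      (∫ θ in (0:ℝ)..(Real.pi/2), f θ) + ∫ θ in (Real.pi/2)..Real.pi, f θ :=
    (intervalIntegral.integral_add_adjacent_intervals (hint _ _) (hint _ _)).symm
  have hrefl : (∫ θ in (Real.pi/2)..Real.pi, f θ) =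
      ∫ θ in (0:ℝ)..(Real.pi/2), f (Real.pi - θ) := by
    have h := intervalIntegral.integral_comp_sub_left (a := (0:ℝ)) (b := Real.pi/2) f Real.pi
    rw [sub_zero] at h
    have h2 : Real.pi - Real.pi / 2 = Real.pi / 2 := by ring
    rw [h2] at h
    exact h.symm
  have hintc : IntervalIntegrable (fun θ => f (Real.pi - θ)) MeasureTheory.volume 0 (Real.pi/2) :=
    (hcont.comp (by fun_prop)).intervalIntegrable _ _
  have hsum : (∫ θ in (0:ℝ)..(Real.pi/2), f θ) + (∫ θ in (0:ℝ)..(Real.pi/2), f (Real.pi - θ)) =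
      ∫ θ in (0:ℝ)..(Real.pi/2), (f θ + f (Real.pi - θ)) :=
    (intervalIntegral.integral_add (hint _ _) hintc).symm
  have hkey : ∀ θ : ℝ, f θ + f (Real.pi - θ) = Real.log (1 - r ^ 2) * Real.sin θ ^ (n - 2) := by
    intro θ
    have hA := hpos θ
    have hB := hpos (Real.pi - θ)
    simp only [Real.sin_pi_sub, Real.cos_pi_sub, mul_neg, sub_neg_eq_add] at hB ⊢
    rw [hf]
    simp only [Real.sin_pi_sub, Real.cos_pi_sub, mul_neg, sub_neg_eq_add]
    rw [← mul_add, ← Real.log_mul hA.ne' hB.ne']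
    have hXnn : 0 ≤ 1 - r ^ 2 * Real.sin θ ^ 2 :=
      le_of_lt (lt_of_le_of_lt (sq_nonneg _) (hX θ))
    have hs := Real.sq_sqrt hXnn
    have h1 : Real.sin θ ^ 2 + Real.cos θ ^ 2 = 1 := Real.sin_sq_add_cos_sq θ
    have harg : (Real.sqrt (1 - r ^ 2 * Real.sin θ ^ 2) - r * Real.cos θ) *
        (Real.sqrt (1 - r ^ 2 * Real.sin θ ^ 2) + r * Real.cos θ) = 1 - r ^ 2 := by
      nlinarith [hs]
    rw [harg, mul_comm]
  calc (∫ θ in (0:ℝ)..Real.pi, f θ)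
      = ∫ θ in (0:ℝ)..(Real.pi/2), (f θ + f (Real.pi - θ)) := by rw [hsplit, hrefl, hsum]
    _ = ∫ θ in (0:ℝ)..(Real.pi/2), Real.log (1 - r ^ 2) * Real.sin θ ^ (n - 2) := by
        simp only [hkey]
    _ = Real.log (1 - r ^ 2) * ∫ θ in (0:ℝ)..(Real.pi/2), Real.sin θ ^ (n - 2) :=
        intervalIntegral.integral_const_mul _ _
end
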